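/- arXiv:1912.11465 — 5 statements merged into one kernel-verified Lean document; each statement's English description precedes it below -/
import Mathlib

section
/- Let $Q$ be an involutory quandle and $a,b,c \in Q$ with $c \rhd a = c \rhd b$. Then for every $z \in Q$: $z^{cab} = z^{abc}$ and $z^{cba} = z^{bac}$. -/
/-- An involutory quandle: `x ▷ x = x`, `(x ▷ y) ▷ y = x`, and right self-distributivity. -/
structure InvQuandle (Q : Type*) where
  act : Q → Q → Q
  idem : ∀ x, act x x = x
  invol : ∀ x y, act (act x y) y = x
  distrib : ∀ x y z, act (act x y) z = act (act x z) (act y z)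

namespace InvQuandle

variable {Q : Type*}

/-- Apply a word (list of quandle elements) to `z` on the right:
`apw R z [y₁,…,y_k] = ((z ▷ y₁) ▷ y₂) ⋯ ▷ y_k`. -/
def apw (R : InvQuandle Q) (z : Q) (w : List Q) : Q := w.foldl R.act z

/-- The word `w` repeated `n` times. -/
def wpow (w : List Q) : ℕ → List Q
  | 0 => []
  | n + 1 => w ++ wpow w n

end InvQuandle

/-- Distributing `▷ a` and then `▷ b` over `x ▷ c` turns `c` into `(c ▷ a) ▷ b = (c ▷ b) ▷ b = c`. -/
theorem InvQuandle.act_act_act_eq_of_act_eq {Q : Type*} (R : InvQuandle Q) {a b c : Q}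
    (h : R.act c a = R.act c b) (x : Q) :
    R.act (R.act (R.act x c) a) b = R.act (R.act (R.act x a) b) c := by
  rw [R.distrib x c a, R.distrib _ _ b, h, R.invol]

open InvQuandle

/-- If $c ▷ a = c ▷ b$ then $z^{cab} = z^{abc}$ and $z^{cba} = z^{bac}$. -/
theorem stmt5 {Q : Type*} (R : InvQuandle Q) (a b c : Q)
    (h : R.act c a = R.act c b) (z : Q) :
    R.apw z [c, a, b] = R.apw z [a, b, c] ∧ R.apw z [c, b, a] = R.apw z [b, a, c] :=
  ⟨R.act_act_act_eq_of_act_eq h z, R.act_act_act_eq_of_act_eq h.symm z⟩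
end

section
/- Let $Q$ be an involutory quandle and $a,b,c \in Q$ with $c \rhd a = c \rhd b$. Then for every $z \in Q$ and every word $w \in \{ca, ac, cb, bc\}$ (i.e. $w$ acting as the corresponding two-letter sequence), $z^{wab} = z^{baw}$ and $z^{wba} = z^{abw}$. -/
open InvQuandle

/-!
Self-distributivity says that the word `y x` acts as `x (y ▷ x)`. So `c a b` acts as
`a (c ▷ a) b = a (c ▷ b) b`, which acts as `a b c`: the letter `c` commutes with `a b`, and
symmetrically with `b a`. The eight identities follow from this by cancelling `a a` and `b b`.
-/

namespace InvQuandle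

variable {Q : Type*} (R : InvQuandle Q)

theorem act_act_act_rotate_of_act_eq {a b c : Q} (h : R.act c a = R.act c b) (z : Q) :
    R.act (R.act (R.act z c) a) b = R.act (R.act (R.act z a) b) c := by
  rw [R.distrib z c a, h, R.distrib (R.act z a) (R.act c b) b, R.invol]

theorem apw_swap_of_mem_ca_ac {a b c : Q} (h : R.act c a = R.act c b) (z : Q) {w : List Q}
    (hw : w ∈ [[c, a], [a, c]]) :
    R.apw z (w ++ [a, b]) = R.apw z ([b, a] ++ w) ∧
    R.apw z (w ++ [b, a]) = R.apw z ([a, b] ++ w) := by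
  have hab := R.act_act_act_rotate_of_act_eq h
  have hba := R.act_act_act_rotate_of_act_eq h.symm
  simp only [List.mem_cons, List.not_mem_nil, or_false] at hw
  rcases hw with rfl | rfl <;> simp only [apw, List.cons_append, List.nil_append, List.foldl]
  · exact ⟨by rw [R.invol, ← hba, R.invol], by rw [hab]⟩
  · exact ⟨by rw [hab, R.invol, R.invol], by rw [hba]⟩

end InvQuandle

/-- If $c ▷ a = c ▷ b$, then for every word $w ∈ \{ca, ac, cb, bc\}$,
$z^{wab} = z^{baw}$ and $z^{wba} = z^{abw}$. -/
theorem stmt6 {Q : Type*} (R : InvQuandle Q) (a b c : Q)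
    (h : R.act c a = R.act c b) (z : Q) (w : List Q)
    (hw : w ∈ [[c, a], [a, c], [c, b], [b, c]]) :
    R.apw z (w ++ [a, b]) = R.apw z ([b, a] ++ w) ∧
    R.apw z (w ++ [b, a]) = R.apw z ([a, b] ++ w) := by
  simp only [List.mem_cons, List.not_mem_nil, or_false] at hw
  rcases hw with rfl | rfl | rfl | rfl
  · exact R.apw_swap_of_mem_ca_ac h z (by simp)
  · exact R.apw_swap_of_mem_ca_ac h z (by simp)
  · exact (R.apw_swap_of_mem_ca_ac h.symm z (by simp)).symm
  · exact (R.apw_swap_of_mem_ca_ac h.symm z (by simp)).symm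
end

section
/- Let $Q$ be an involutory quandle and $a,b,c \in Q$ with $c \rhd a = c \rhd b$. Then for every $z \in Q$ and every word $w \in \{ca, ac, cb, bc\}$, $z^{w^2 ab} = z^{ab w^2}$ and $z^{w^2 ba} = z^{ba w^2}$, where $w^2$ denotes the word $w$ repeated twice. -/
open InvQuandle

/-!
Write `s_y` for the involution `x ↦ x ▷ y`. Self-distributivity says `s_{u ▷ y} = s_y s_u s_y`,
so with `d := c ▷ a = c ▷ b` the square of each of the words `ca, ac, cb, bc` acts as `s_d s_c`
or `s_c s_d`. The two expressions `s_a s_c s_a = s_d = s_b s_c s_b` show that `s_b s_a` commutes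
with both `s_c` and `s_d`, hence with `w²`. The claim for `ba` is the one for `ab` with `a`, `b`
swapped.
-/

namespace InvQuandle

variable {Q : Type*} (R : InvQuandle Q)

def sym (y : Q) : Q → Q := fun x => R.act x y

@[simp]
theorem sym_sym (x y : Q) : R.sym y (R.sym y x) = x :=
  R.invol x y

theorem sym_act (u y : Q) : R.sym (R.act u y) = R.sym y ∘ R.sym u ∘ R.sym y := by
  funext x
  simp only [sym, Function.comp_apply, R.distrib (R.act x y) u y, R.invol]

theorem apw_append (z : Q) (u v : List Q) : R.apw z (u ++ v) = R.apw (R.apw z u) v :=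
  List.foldl_append

theorem apw_square_pair_eq_sym_act_comp (x y : Q) :
    (fun z => R.apw z ([x, y] ++ [x, y])) = R.sym (R.act x y) ∘ R.sym x := by
  rw [sym_act]
  rfl

theorem apw_square_pair_eq_comp_sym_act (x y : Q) :
    (fun z => R.apw z ([x, y] ++ [x, y])) = R.sym y ∘ R.sym (R.act y x) := by
  rw [sym_act]
  rfl

variable {R} {a b c : Q} {w : List Q}

theorem commute_sym_comp_sym_act (h : R.act c a = R.act c b) :
    Function.Commute (R.sym b ∘ R.sym a) (R.sym (R.act c a)) := by
  intro z
  conv_rhs => rw [h, sym_act]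
  simp only [sym_act, Function.comp_apply, sym_sym]

theorem commute_sym_comp_sym (h : R.act c a = R.act c b) :
    Function.Commute (R.sym b ∘ R.sym a) (R.sym c) := by
  intro z
  have hd := congrFun (congrArg R.sym h) (R.sym a z)
  simp only [sym_act, Function.comp_apply, sym_sym] at hd
  simp only [Function.comp_apply, hd, sym_sym]

theorem commute_sym_comp_apw_square (h : R.act c a = R.act c b)
    (hw : w ∈ [[c, a], [a, c], [c, b], [b, c]]) :
    Function.Commute (R.sym b ∘ R.sym a) (fun z => R.apw z (w ++ w)) := by
  have hc := commute_sym_comp_sym h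
  have hd := commute_sym_comp_sym_act h
  simp only [List.mem_cons, List.not_mem_nil, or_false] at hw
  rcases hw with rfl | rfl | rfl | rfl
  · rw [apw_square_pair_eq_sym_act_comp]
    exact hd.comp_right hc
  · rw [apw_square_pair_eq_comp_sym_act]
    exact hc.comp_right hd
  · rw [apw_square_pair_eq_sym_act_comp, ← h]
    exact hd.comp_right hc
  · rw [apw_square_pair_eq_comp_sym_act, ← h]
    exact hc.comp_right hd

theorem apw_square_append_pair_comm (h : R.act c a = R.act c b)
    (hw : w ∈ [[c, a], [a, c], [c, b], [b, c]]) (z : Q) :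
    R.apw z (w ++ w ++ [a, b]) = R.apw z ([a, b] ++ (w ++ w)) := by
  rw [R.apw_append z (w ++ w) [a, b], R.apw_append z [a, b] (w ++ w)]
  exact commute_sym_comp_apw_square h hw z

end InvQuandle

/-- If $c ▷ a = c ▷ b$, then for every word $w ∈ \{ca, ac, cb, bc\}$,
$z^{w^2 ab} = z^{ab w^2}$ and $z^{w^2 ba} = z^{ba w^2}$. -/
theorem stmt7 {Q : Type*} (R : InvQuandle Q) (a b c : Q)
    (h : R.act c a = R.act c b) (z : Q) (w : List Q)
    (hw : w ∈ [[c, a], [a, c], [c, b], [b, c]]) :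
    R.apw z (w ++ w ++ [a, b]) = R.apw z ([a, b] ++ (w ++ w)) ∧
    R.apw z (w ++ w ++ [b, a]) = R.apw z ([b, a] ++ (w ++ w)) := by
  have hw' : w ∈ [[c, b], [b, c], [c, a], [a, c]] := by
    simp only [List.mem_cons, List.not_mem_nil, or_false] at hw ⊢
    tauto
  exact ⟨apw_square_append_pair_comm h hw z, apw_square_append_pair_comm h.symm hw' z⟩
end

section
/- Let $Q$ be an involutory quandle, $a,b,c \in Q$ with $c \rhd a = c \rhd b$, and $t \geq 0$. Set $X = (ba)^t c$ (as a word) and let $a^X, b^X$ be the corresponding elements. Then for all $z \in Q$: $z^{b^X\, a\, a^X} = z^{a^X\, a\, b^X}$. -/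
open InvQuandle

/-!
Write `s_y = (· ▷ y)`, an involution of `Q`. Self-distributivity says `s_{x ▷ y} = s_y s_x s_y`,
so `s_{x^w} = g s_x g⁻¹` where `g` is the composite of the `s_y` along the word `w`. The hypothesis
`c ▷ a = c ▷ b` means that `s_c` commutes with `v = s_a s_b`, hence so does `g = s_c v^t` for
`X = (ba)^t c`. The claim then becomes `g s_a g⁻¹ s_a g s_b g⁻¹ = g s_b g⁻¹ s_a g s_a g⁻¹`, which
holds for any involutions `s_a, s_b` of a group and any `g` commuting with `s_a s_b`.
-/

section Involutions

variable {G : Type*} [Group G] {p q : G}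

theorem commute_mul_of_mul_mul_eq {r : G} (hp : p * p = 1) (hq : q * q = 1)
    (h : p * r * p = q * r * q) : Commute r (p * q) :=
  calc r * (p * q) = p * (p * r * p) * q := by simp only [← mul_assoc, hp, one_mul]
    _ = p * (q * r * q) * q := by rw [h]
    _ = p * q * r := by simp only [mul_assoc, hq, mul_one]

/-- Both sides are conjugate by `g` to `p * m * q` and `q * m * p`, where `m = g⁻¹ * p * g`; these
agree because `(q * p) * m * (q * p) = m`: `g` commutes with `q * p = (p * q)⁻¹`, which `p`
inverts. -/
theorem conj_mul_mul_conj_comm {g : G} (hp : p * p = 1) (hq : q * q = 1)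
    (hg : Commute g (p * q)) :
    g * p * g⁻¹ * p * (g * q * g⁻¹) = g * q * g⁻¹ * p * (g * p * g⁻¹) := by
  have hg' : Commute g (q * p) := by
    rw [← inv_eq_of_mul_eq_one_left hp, ← inv_eq_of_mul_eq_one_left hq, ← mul_inv_rev]
    exact hg.inv_right
  set m := g⁻¹ * p * g
  have key : q * (p * m * q) * p = q * (q * m * p) * p :=
    calc q * (p * m * q) * p = q * p * g⁻¹ * p * (g * (q * p)) := by simp only [m, mul_assoc]
      _ = g⁻¹ * (q * (p * p) * q * p) * g := by
          rw [← hg'.inv_left.eq, hg'.eq]; simp only [mul_assoc]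
      _ = q * q * m * (p * p) := by simp only [m, hp, hq, mul_one, one_mul]
      _ = q * (q * m * p) * p := by simp only [mul_assoc]
  have core : p * m * q = q * m * p := mul_left_cancel (mul_right_cancel key)
  calc g * p * g⁻¹ * p * (g * q * g⁻¹) = g * (p * m * q) * g⁻¹ := by simp only [m]; group
    _ = g * (q * m * p) * g⁻¹ := by rw [core]
    _ = g * q * g⁻¹ * p * (g * p * g⁻¹) := by simp only [m]; group

end Involutions

namespace InvQuandle

variable {Q : Type*} (R : InvQuandle Q)

def actPerm (y : Q) : Equiv.Perm Q where
  toFun z := R.act z y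
  invFun z := R.act z y
  left_inv z := R.invol z y
  right_inv z := R.invol z y

/-- Reversed since multiplication in `Equiv.Perm` is composition: `R.apw z w = R.wordPerm w z`
holds by `rfl` for explicit words. -/
def wordPerm (w : List Q) : Equiv.Perm Q := (w.reverse.map R.actPerm).prod

@[simp]
theorem actPerm_apply (y z : Q) : R.actPerm y z = R.act z y := rfl

theorem actPerm_mul_self (y : Q) : R.actPerm y * R.actPerm y = 1 :=
  Equiv.ext fun z => R.invol z y

theorem actPerm_inv (y : Q) : (R.actPerm y)⁻¹ = R.actPerm y :=
  inv_eq_of_mul_eq_one_left (R.actPerm_mul_self y)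

theorem actPerm_act (x y : Q) :
    R.actPerm (R.act x y) = R.actPerm y * R.actPerm x * R.actPerm y :=
  Equiv.ext fun z => by
    simp only [Equiv.Perm.mul_apply, actPerm_apply]
    rw [R.distrib, R.invol]

theorem wordPerm_singleton (y : Q) : R.wordPerm [y] = R.actPerm y := by
  simp [wordPerm]

theorem wordPerm_append (w₁ w₂ : List Q) :
    R.wordPerm (w₁ ++ w₂) = R.wordPerm w₂ * R.wordPerm w₁ := by
  simp [wordPerm]

theorem wordPerm_wpow (w : List Q) (n : ℕ) : R.wordPerm (wpow w n) = R.wordPerm w ^ n := by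
  induction n with
  | zero => simp [wpow, wordPerm]
  | succ n ih => rw [wpow, wordPerm_append, ih, pow_succ]

theorem actPerm_apw (x : Q) (w : List Q) :
    R.actPerm (R.apw x w) = R.wordPerm w * R.actPerm x * (R.wordPerm w)⁻¹ := by
  induction w generalizing x with
  | nil => simp [apw, wordPerm]
  | cons y w ih =>
    rw [show R.apw x (y :: w) = R.apw (R.act x y) w from rfl, ih, actPerm_act,
      ← List.singleton_append, wordPerm_append, wordPerm_singleton, mul_inv_rev, actPerm_inv]
    group

end InvQuandle

/-- With $X = (ba)^t c$, if $c ▷ a = c ▷ b$ then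
$z^{b^X a a^X} = z^{a^X a b^X}$ for all $z$. -/
theorem stmt10 {Q : Type*} (R : InvQuandle Q) (a b c : Q)
    (h : R.act c a = R.act c b) (t : ℕ) (z : Q) :
    R.apw z [R.apw b (wpow [b, a] t ++ [c]), a, R.apw a (wpow [b, a] t ++ [c])] =
    R.apw z [R.apw a (wpow [b, a] t ++ [c]), a, R.apw b (wpow [b, a] t ++ [c])] := by
  have hc : Commute (R.actPerm c) (R.actPerm a * R.actPerm b) := by
    refine commute_mul_of_mul_mul_eq (R.actPerm_mul_self a) (R.actPerm_mul_self b) ?_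
    rw [← actPerm_act, ← actPerm_act, h]
  have hX : Commute (R.wordPerm (wpow [b, a] t ++ [c])) (R.actPerm a * R.actPerm b) := by
    rw [wordPerm_append, wordPerm_wpow, wordPerm_singleton]
    exact hc.mul_left ((Commute.refl _).pow_left t)
  have hperm := conj_mul_mul_conj_comm (R.actPerm_mul_self a) (R.actPerm_mul_self b) hX
  rw [← actPerm_apw, ← actPerm_apw] at hperm
  exact congrArg (· z) hperm
end

section
/- Let $Q$ be an involutory quandle, $a,b,c \in Q$ with $c \rhd a = c \rhd b$. Then for all $i, j \geq 0$: $a^{(ca)^i (ba)^j c} = a^{(ca)^i c (ba)^j}$ (relation $\alpha_{i,j}$). -/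
open InvQuandle

namespace InvQuandle

variable {Q : Type*} (R : InvQuandle Q)

theorem apw_wpow_append_comm {w v : List Q} (hwv : ∀ z, R.apw z (w ++ v) = R.apw z (v ++ w))
    (n : ℕ) (z : Q) : R.apw z (wpow w n ++ v) = R.apw z (v ++ wpow w n) := by
  induction n generalizing z with
  | zero => simp [wpow]
  | succ n ih =>
    calc R.apw z (wpow w (n + 1) ++ v)
        = R.apw (R.apw z w) (wpow w n ++ v) := by rw [wpow, List.append_assoc, apw_append]
      _ = R.apw z (w ++ v ++ wpow w n) := by rw [ih, ← apw_append, List.append_assoc]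
      _ = R.apw z (v ++ wpow w (n + 1)) := by
        rw [apw_append, hwv, ← apw_append, List.append_assoc, wpow]

/-- By distributivity `z^{cba} = z^{b(c ▷ b)a}`; trading `c ▷ b` for `c ▷ a` and distributing
again gives `z^{bac}`. -/
theorem apw_ba_c_eq_apw_c_ba {a b c : Q} (h : R.act c a = R.act c b) (z : Q) :
    R.apw z ([b, a] ++ [c]) = R.apw z ([c] ++ [b, a]) := by
  change R.act (R.act (R.act z b) a) c = R.act (R.act (R.act z c) b) a
  rw [R.distrib z c b, ← h, R.distrib _ (R.act c a) a, R.invol c a]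

end InvQuandle

/-- relation $α_{i,j}$: if $c ▷ a = c ▷ b$ then
$a^{(ca)^i (ba)^j c} = a^{(ca)^i c (ba)^j}$. -/
theorem stmt12 {Q : Type*} (R : InvQuandle Q) (a b c : Q)
    (h : R.act c a = R.act c b) (i j : ℕ) :
    R.apw a (wpow [c, a] i ++ wpow [b, a] j ++ [c]) =
    R.apw a (wpow [c, a] i ++ [c] ++ wpow [b, a] j) := by
  rw [List.append_assoc, List.append_assoc, apw_append R a (wpow [c, a] i),
    apw_append R a (wpow [c, a] i)]
  exact R.apw_wpow_append_comm (R.apw_ba_c_eq_apw_c_ba h) j _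
end
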